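/- Let α, σ, σ_a, C_z be positive reals, let r and M be positive integers, and set ν_M² = α²σ²/M + σ_a². Then the infimum over γ ∈ ℝ of the supremum over z ∈ ℝ^r with ‖z‖₂² ≤ r C_z² of (γ α/√M − 1)² ‖z‖₂² + γ² r ν_M² equals r C_z² (α²σ²/M + σ_a²) / (α²(C_z² + σ²)/M + σ_a²); in particular, when C_z ≥ 1 this minimax error is at least r (α²σ²/M + σ_a²) / (α²(C_z² + σ²)/M + σ_a²). -/
import Mathlib

/-- **Adversarial reconstruction error under massive MIMO.**
With `M` transmit antennas, channel hardening makes the adversary's effective channel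
gain `α/√M`, and the combined noise has per-coordinate variance `ν_M² = α²σ²/M + σ_a²`.
The minimax (over the re-scaling factor `γ`, worst case over encodings `z ∈ ℝ^r` with
`‖z‖₂² ≤ r C_z²`) expected squared error `(γα/√M − 1)²‖z‖₂² + γ² r ν_M²` equals
`r C_z² (α²σ²/M + σ_a²) / (α²(C_z² + σ²)/M + σ_a²)`; in particular for `C_z ≥ 1` this
minimax error is at least `r (α²σ²/M + σ_a²) / (α²(C_z² + σ²)/M + σ_a²)`. -/
theorem massive_mimo_adversarial_mse
    (α σ σa Cz : ℝ) (hα : 0 < α) (hσ : 0 < σ) (hσa : 0 < σa) (hCz : 0 < Cz)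
    (r M : ℕ) (hr : 0 < r) (hM : 0 < M)
    (νM2 : ℝ) (hνM2 : νM2 = α ^ 2 * σ ^ 2 / M + σa ^ 2) :
    (⨅ γ : ℝ, sSup {e : ℝ | ∃ z : Fin r → ℝ, (∑ i, (z i) ^ 2) ≤ r * Cz ^ 2 ∧
        e = (γ * α / Real.sqrt M - 1) ^ 2 * (∑ i, (z i) ^ 2) + γ ^ 2 * r * νM2}) =
        r * Cz ^ 2 * (α ^ 2 * σ ^ 2 / M + σa ^ 2) /
          (α ^ 2 * (Cz ^ 2 + σ ^ 2) / M + σa ^ 2) ∧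
      (1 ≤ Cz →
        r * Cz ^ 2 * (α ^ 2 * σ ^ 2 / M + σa ^ 2) /
            (α ^ 2 * (Cz ^ 2 + σ ^ 2) / M + σa ^ 2) ≥
          r * (α ^ 2 * σ ^ 2 / M + σa ^ 2) /
            (α ^ 2 * (Cz ^ 2 + σ ^ 2) / M + σa ^ 2)) := by
  have hMpos : (0:ℝ) < M := by exact_mod_cast hM
  have hrpos : (0:ℝ) < r := by exact_mod_cast hr
  set t := Real.sqrt M with htdef
  have ht0 : 0 < t := Real.sqrt_pos.mpr hMpos
  have ht2 : t ^ 2 = (M:ℝ) := Real.sq_sqrt hMpos.le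
  have hν : 0 < νM2 := by rw [hνM2]; positivity
  have hsum : (∑ _i : Fin r, Cz ^ 2) = (r:ℝ) * Cz ^ 2 := by
    simp [Finset.sum_const, mul_comm]
  set g : ℝ → ℝ := fun γ => (γ * α / t - 1) ^ 2 * (r * Cz ^ 2) + γ ^ 2 * r * νM2 with hg
  have hS : ∀ γ : ℝ, sSup {e : ℝ | ∃ z : Fin r → ℝ, (∑ i, (z i) ^ 2) ≤ r * Cz ^ 2 ∧
      e = (γ * α / Real.sqrt M - 1) ^ 2 * (∑ i, (z i) ^ 2) + γ ^ 2 * r * νM2} = g γ := by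
    intro γ
    apply le_antisymm
    · apply csSup_le
      · exact ⟨_, ⟨fun _ => Cz, by rw [hsum], rfl⟩⟩
      · rintro e ⟨z, hz, rfl⟩
        have h1 : (0:ℝ) ≤ (γ * α / t - 1) ^ 2 := sq_nonneg _
        have := mul_le_mul_of_nonneg_left hz h1
        simp only [hg, ← htdef]
        nlinarith
    · apply le_csSup
      · refine ⟨g γ, ?_⟩
        rintro e ⟨z, hz, rfl⟩
        have h1 : (0:ℝ) ≤ (γ * α / t - 1) ^ 2 := sq_nonneg _
        have := mul_le_mul_of_nonneg_left hz h1
        simp only [hg, ← htdef]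
        nlinarith
      · exact ⟨fun _ => Cz, by rw [hsum], by rw [hsum]⟩
  rw [iInf_congr hS]
  set D : ℝ := α ^ 2 * (Cz ^ 2 + σ ^ 2) / M + σa ^ 2 with hD
  have hDpos : 0 < D := by rw [hD]; positivity
  have hDν : D = Cz ^ 2 * (α / t) ^ 2 + νM2 := by
    rw [hD, hνM2, div_pow, ht2]; ring
  clear_value D
  constructor
  · have hlow : ∀ γ : ℝ, r * Cz ^ 2 * (α ^ 2 * σ ^ 2 / M + σa ^ 2) / D ≤ g γ := by
      intro γ
      rw [div_le_iff₀ hDpos, ← hνM2, hDν, hg]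
      simp only
      have key := mul_nonneg hrpos.le
        (sq_nonneg ((Cz ^ 2 * (α / t) ^ 2 + νM2) * γ - Cz ^ 2 * (α / t)))
      have h2 : t ≠ 0 := ht0.ne'
      have heq : ((γ * α / t - 1) ^ 2 * (r * Cz ^ 2) + γ ^ 2 * r * νM2) *
            (Cz ^ 2 * (α / t) ^ 2 + νM2) - r * Cz ^ 2 * νM2 =
          r * ((Cz ^ 2 * (α / t) ^ 2 + νM2) * γ - Cz ^ 2 * (α / t)) ^ 2 := by
        field_simp
        ring
      linarith [key, heq]
    apply le_antisymm
    · have hγ : g (Cz ^ 2 * (α / t) / D) =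
          r * Cz ^ 2 * (α ^ 2 * σ ^ 2 / M + σa ^ 2) / D := by
        rw [← hνM2, hg]
        simp only
        rw [hDν]
        have h2 : t ≠ 0 := ht0.ne'
        have hD' : Cz ^ 2 * (α / t) ^ 2 + νM2 ≠ 0 := by rw [← hDν]; exact hDpos.ne'
        field_simp
        ring
      calc (⨅ γ, g γ) ≤ g (Cz ^ 2 * (α / t) / D) := by
            apply ciInf_le
            refine ⟨r * Cz ^ 2 * (α ^ 2 * σ ^ 2 / M + σa ^ 2) / D, ?_⟩
            rintro x ⟨γ, rfl⟩; exact hlow γ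
        _ = _ := hγ
    · exact le_ciInf hlow
  · intro hCz1
    rw [ge_iff_le, div_le_div_iff₀ hDpos hDpos]
    have hN : 0 ≤ α ^ 2 * σ ^ 2 / (M:ℝ) + σa ^ 2 := by positivity
    have h1 : (1:ℝ) ≤ Cz ^ 2 := by nlinarith
    have h2 : 0 ≤ (r:ℝ) * (α ^ 2 * σ ^ 2 / (M:ℝ) + σa ^ 2) * D :=
      mul_nonneg (mul_nonneg hrpos.le hN) hDpos.le
    have h3 := mul_le_mul_of_nonneg_right h1 h2
    clear hS
    linarith [h3]
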